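/- For every r > 0 and θ ∈ (0,π), the function θ ↦ p(r,θ) is differentiable and ∂p/∂θ(r,θ) = cot θ·(F(r·sin θ) + r·sin θ·𝓕(r·sin θ, θ)) = cot θ·U(r,θ). -/

import Mathlib

/-!
Substituting `s = f(τ)` in `𝓕`, and using `θ̄(f(τ)) = τ`, `cosh f(τ) = 1 / sin τ`,
`f'(τ) = 1 / sin τ`, gives `𝓕(ξ, θ) = ∫_{π/2}^θ g ρ_θ(ξ / sin τ, τ) / sin τ dτ`, so `𝓕` has the
continuous θ-derivative `g ρ_θ(ξ / sin θ, θ) / sin θ`. Now differentiate the three terms of `p`,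
the middle one by the Leibniz rule for `∫_{a sin θ}^{r sin θ}`: its boundary term at `a sin θ`
cancels the derivative of the last term, and its interior term
`∫_{a sin θ}^{r sin θ} g ρ_θ(s / sin θ, θ) / sin θ ds = g ∫_a^r ρ_θ(s, θ) ds` cancels the derivative
of the first, leaving `cot θ · U(r, θ)`.

The Leibniz rule for `∫_{α(y)}^{β(y)} G(s, y) ds` with `G(s, y) = f(s) + ∫_c^y W(s, τ) dτ` is the
chain rule for `(x, y) ↦ ∫_0^x G(s, y) ds`, whose partial derivatives `G(x, y)` and (by Fubini)
`∫_0^x W(s, y) ds` are continuous.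
-/

/-- The characteristic curve `s ↦ θ̄(s)`. -/
noncomputable def thetaBar (s : ℝ) : ℝ :=
  Real.arccos ((1 - Real.exp (2 * s)) / (1 + Real.exp (2 * s)))

/-- The function `f(θ) = ½·ln((1−cos θ)/(1+cos θ))`. -/
noncomputable def fChar (θ : ℝ) : ℝ :=
  (1 / 2) * Real.log ((1 - Real.cos θ) / (1 + Real.cos θ))

/-- `𝓕(ξ,θ) = ∫₀^{f(θ)} g·ρ_θ(ξ·(e^s+e^{−s})/2, θ̄(s)) ds`. -/
noncomputable def calF (g : ℝ) (ρθ : ℝ → ℝ → ℝ) (ξ θ : ℝ) : ℝ :=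
  ∫ s in (0:ℝ)..(fChar θ),
    g * ρθ (ξ * (Real.exp s + Real.exp (-s)) / 2) (thetaBar s)

/-- `U(r,θ) = F(r·sin θ) + r·sin θ·𝓕(r·sin θ, θ)`. -/
noncomputable def UU (g : ℝ) (ρθ : ℝ → ℝ → ℝ) (F : ℝ → ℝ) (r θ : ℝ) : ℝ :=
  F (r * Real.sin θ) + r * Real.sin θ * calF g ρθ (r * Real.sin θ) θ

/-- The pressure
`p(r,θ) = b − g·∫_a^r ρ(s,θ) ds + ∫_{a sin θ}^{r sin θ} (F(s)/s + 𝓕(s,θ)) ds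
  + ∫_{π/2}^{θ} (F(a sin s)·cot s + 𝓕(a sin s, s)·a·cos s) ds`. -/
noncomputable def pres (g a b : ℝ) (ρ ρθ : ℝ → ℝ → ℝ) (F : ℝ → ℝ) (r θ : ℝ) : ℝ :=
  b - g * (∫ s in a..r, ρ s θ)
    + (∫ s in (a * Real.sin θ)..(r * Real.sin θ), (F s / s + calF g ρθ s θ))
    + ∫ s in (Real.pi / 2)..θ,
        (F (a * Real.sin s) * Real.cot s + calF g ρθ (a * Real.sin s) s * a * Real.cos s)

open MeasureTheory Set Filter Topology intervalIntegral Function ContinuousLinearMap Real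

section Leibniz

variable {f α β : ℝ → ℝ} {W : ℝ → ℝ → ℝ} {c : ℝ}

theorem intervalIntegral_swap_of_continuous (hW : Continuous (uncurry W)) (a b a' b' : ℝ) :
    ∫ x in a..b, ∫ y in a'..b', W x y = ∫ y in a'..b', ∫ x in a..b, W x y :=
  intervalIntegral_intervalIntegral_swap <|
    (hW.continuousOn.integrableOn_compact (isCompact_uIcc.prod isCompact_uIcc)).mono_set
      (prod_mono uIoc_subset_uIcc uIoc_subset_uIcc)

theorem hasStrictFDerivAt_integral_add_primitive (hf : Continuous f)
    (hW : Continuous (uncurry W)) (p : ℝ × ℝ) :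
    HasStrictFDerivAt (uncurry fun x y => ∫ s in (0 : ℝ)..x, (f s + ∫ τ in c..y, W s τ))
      ((toSpanSingleton ℝ (f p.1 + ∫ τ in c..p.2, W p.1 τ)).coprod
        (toSpanSingleton ℝ (∫ s in (0 : ℝ)..p.1, W s p.2))) p := by
  have hG : Continuous fun q : ℝ × ℝ => f q.1 + ∫ τ in c..q.2, W q.1 τ :=
    (hf.comp continuous_fst).add (continuous_parametric_intervalIntegral_of_continuous
      (f := fun (q : ℝ × ℝ) (τ : ℝ) => W q.1 τ)
      (hW.comp (by fun_prop : Continuous fun z : (ℝ × ℝ) × ℝ => (z.1.1, z.2))) continuous_snd)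
  have hWint : Continuous fun q : ℝ × ℝ => ∫ s in (0 : ℝ)..q.1, W s q.2 :=
    continuous_parametric_intervalIntegral_of_continuous
      (f := fun (q : ℝ × ℝ) (s : ℝ) => W s q.2)
      (hW.comp (by fun_prop : Continuous fun z : (ℝ × ℝ) × ℝ => (z.2, z.1.2))) continuous_fst
  refine hasStrictFDerivAt_uncurry_coprod (u := p)
    (f := fun x y => ∫ s in (0 : ℝ)..x, (f s + ∫ τ in c..y, W s τ))
    (f₁ := fun x y => toSpanSingleton ℝ (f x + ∫ τ in c..y, W x τ))
    (f₂ := fun x y => toSpanSingleton ℝ (∫ s in (0 : ℝ)..x, W s y))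
    (.of_forall fun q => ?_) (.of_forall fun q => ?_)
    ((toSpanSingletonCLE (𝕜 := ℝ) (E := ℝ)).continuous.comp hG).continuousAt
    ((toSpanSingletonCLE (𝕜 := ℝ) (E := ℝ)).continuous.comp hWint).continuousAt
  · exact ((hG.comp (continuous_id.prodMk continuous_const)).integral_hasStrictDerivAt
      0 q.1).hasDerivAt
  · have hswap : (fun y => ∫ s in (0 : ℝ)..q.1, (f s + ∫ τ in c..y, W s τ))
        = fun y => (∫ s in (0 : ℝ)..q.1, f s) + ∫ τ in c..y, ∫ s in (0 : ℝ)..q.1, W s τ := by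
      funext y
      rw [integral_add (hf.intervalIntegrable _ _)
        ((continuous_parametric_intervalIntegral_of_continuous' hW c y).intervalIntegrable _ _),
        intervalIntegral_swap_of_continuous hW]
    rw [hswap]
    exact (((hWint.comp (continuous_const.prodMk continuous_id)).integral_hasStrictDerivAt
      c q.2).hasDerivAt).const_add _

theorem hasDerivAt_integral_add_primitive (hf : Continuous f) (hW : Continuous (uncurry W))
    {α' β' y : ℝ} (hα : HasDerivAt α α' y) (hβ : HasDerivAt β β' y) :
    HasDerivAt (fun y => ∫ s in α y..β y, (f s + ∫ τ in c..y, W s τ))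
      (β' * (f (β y) + ∫ τ in c..y, W (β y) τ) - α' * (f (α y) + ∫ τ in c..y, W (α y) τ)
        + ∫ s in α y..β y, W s y) y := by
  have hG : ∀ x, Continuous fun s => f s + ∫ τ in c..x, W s τ := fun x =>
    hf.add (continuous_parametric_intervalIntegral_of_continuous' hW c x)
  have hWy : Continuous fun s => W s y := hW.comp (continuous_id.prodMk continuous_const)
  have hchain : ∀ {γ : ℝ → ℝ} {γ' : ℝ}, HasDerivAt γ γ' y →
      HasDerivAt (fun x => ∫ s in (0 : ℝ)..γ x, (f s + ∫ τ in c..x, W s τ))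
        (γ' * (f (γ y) + ∫ τ in c..y, W (γ y) τ) + ∫ s in (0 : ℝ)..γ y, W s y) y :=
    fun {γ} _ hγ => ((hasStrictFDerivAt_integral_add_primitive hf hW (γ y, y)).hasFDerivAt
      |>.comp_hasDerivAt (f := fun x => (γ x, x)) y (hγ.prodMk (hasDerivAt_id' y))).congr_deriv
        (by simp)
  have hsplit : (fun x => ∫ s in α x..β x, (f s + ∫ τ in c..x, W s τ)) = fun x =>
      (∫ s in (0 : ℝ)..β x, (f s + ∫ τ in c..x, W s τ))
        - ∫ s in (0 : ℝ)..α x, (f s + ∫ τ in c..x, W s τ) :=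
    funext fun x => (integral_interval_sub_left ((hG x).intervalIntegrable _ _)
      ((hG x).intervalIntegrable _ _)).symm
  rw [hsplit, ← integral_interval_sub_left (hWy.intervalIntegrable 0 (β y))
    (hWy.intervalIntegrable 0 (α y))]
  exact ((hchain hβ).sub (hchain hα)).congr_deriv (by ring)

variable {S T : Set ℝ} [S.OrdConnected] [T.OrdConnected]

theorem exists_Icc_mem_nhds_subset (hT : IsOpen T) (hc : c ∈ T) {y : ℝ} (hy : y ∈ T) :
    ∃ l u, c ∈ Icc l u ∧ Icc l u ∈ 𝓝 y ∧ Icc l u ⊆ T := by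
  obtain ⟨l, u, hylu, hJy, hJT⟩ := exists_Icc_mem_subset_of_mem_nhds (hT.mem_nhds hy)
  have hl : l ∈ T := hJT (left_mem_Icc.2 (hylu.1.trans hylu.2))
  have hu : u ∈ T := hJT (right_mem_Icc.2 (hylu.1.trans hylu.2))
  refine ⟨min l c, max u c, ⟨min_le_right _ _, le_max_right _ _⟩,
    mem_of_superset hJy (Icc_subset_Icc (min_le_left _ _) (le_max_left _ _)),
    OrdConnected.out ‹_› ?_ ?_⟩
  · rcases min_choice l c with h | h <;> rw [h] <;> assumption
  · rcases max_choice u c with h | h <;> rw [h] <;> assumption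

theorem IsCompact.exists_Icc_subset {K : Set ℝ} (hK : IsCompact K) (hKne : K.Nonempty)
    (hKS : K ⊆ S) : ∃ p q, K ⊆ Icc p q ∧ Icc p q ⊆ S :=
  ⟨sInf K, sSup K, fun _ hx => ⟨csInf_le hK.bddBelow hx, le_csSup hK.bddAbove hx⟩,
    OrdConnected.out ‹_› (hKS (hK.sInf_mem hKne)) (hKS (hK.sSup_mem hKne))⟩

/-- Mathlib's continuity results for parametric integrals want globally continuous integrands;
near `y` we may clamp both variables to a compact box inside `S ×ˢ T`. -/
theorem exists_continuous_extension_near (hT : IsOpen T) (hf : ContinuousOn f S)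
    (hW : ContinuousOn (uncurry W) (S ×ˢ T)) (hα : Continuous α) (hβ : Continuous β)
    (hαT : MapsTo α T S) (hβT : MapsTo β T S) (hc : c ∈ T) {y : ℝ} (hy : y ∈ T) :
    ∃ f' : ℝ → ℝ, ∃ W' : ℝ → ℝ → ℝ, Continuous f' ∧ Continuous (uncurry W') ∧
      ∀ᶠ x in 𝓝 y, ∀ s ∈ uIcc (α x) (β x), f' s = f s ∧ ∀ τ ∈ uIcc c x, W' s τ = W s τ := by
  obtain ⟨l, u, hcJ, hJy, hJT⟩ := exists_Icc_mem_nhds_subset hT hc hy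
  have hK : IsCompact (α '' Icc l u ∪ β '' Icc l u) :=
    (isCompact_Icc.image hα).union (isCompact_Icc.image hβ)
  have hKne : (α '' Icc l u ∪ β '' Icc l u).Nonempty := ⟨α c, .inl (mem_image_of_mem α hcJ)⟩
  obtain ⟨p, q, hKI, hIS⟩ := hK.exists_Icc_subset hKne <|
    union_subset (image_subset_iff.2 (hαT.mono_left hJT)) (image_subset_iff.2 (hβT.mono_left hJT))
  have hpq : p ≤ q := nonempty_Icc.1 (hKne.mono hKI)
  have hlu : l ≤ u := hcJ.1.trans hcJ.2
  refine ⟨fun s => f (projIcc p q hpq s), fun s τ => W (projIcc p q hpq s) (projIcc l u hlu τ),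
    hf.comp_continuous (by fun_prop) fun s => hIS (projIcc p q hpq s).2,
    hW.comp_continuous
      (f := fun z : ℝ × ℝ => ((projIcc p q hpq z.1 : ℝ), (projIcc l u hlu z.2 : ℝ))) (by fun_prop)
      fun z => ⟨hIS (projIcc p q hpq z.1).2, hJT (projIcc l u hlu z.2).2⟩, ?_⟩
  filter_upwards [hJy] with x hx s hs
  have hsI : s ∈ Icc p q := ordConnected_Icc.uIcc_subset
    (hKI (.inl (mem_image_of_mem α hx))) (hKI (.inr (mem_image_of_mem β hx))) hs
  refine ⟨by simp [projIcc_of_mem hpq hsI], fun τ hτ => ?_⟩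
  simp [projIcc_of_mem hpq hsI, projIcc_of_mem hlu (ordConnected_Icc.uIcc_subset hcJ hx hτ)]

theorem hasDerivAt_integral_add_primitive_of_continuousOn (hT : IsOpen T) (hf : ContinuousOn f S)
    (hW : ContinuousOn (uncurry W) (S ×ˢ T)) (hα : Continuous α) (hβ : Continuous β)
    (hαT : MapsTo α T S) (hβT : MapsTo β T S) (hc : c ∈ T) {α' β' y : ℝ} (hy : y ∈ T)
    (hα' : HasDerivAt α α' y) (hβ' : HasDerivAt β β' y) :
    HasDerivAt (fun y => ∫ s in α y..β y, (f s + ∫ τ in c..y, W s τ))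
      (β' * (f (β y) + ∫ τ in c..y, W (β y) τ) - α' * (f (α y) + ∫ τ in c..y, W (α y) τ)
        + ∫ s in α y..β y, W s y) y := by
  obtain ⟨f', W', hf', hW', heq⟩ := exists_continuous_extension_near hT hf hW hα hβ hαT hβT hc hy
  have hev : (fun y => ∫ s in α y..β y, (f s + ∫ τ in c..y, W s τ))
      =ᶠ[𝓝 y] fun y => ∫ s in α y..β y, (f' s + ∫ τ in c..y, W' s τ) :=
    heq.mono fun x hx => integral_congr fun s hs => by
      simp only [(hx s hs).1, integral_congr fun τ hτ => (hx s hs).2 τ hτ]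
  have hy' := heq.self_of_nhds
  refine ((hasDerivAt_integral_add_primitive hf' hW' hα' hβ').congr_of_eventuallyEq hev)
    |>.congr_deriv ?_
  simp only [(hy' _ left_mem_uIcc).1, (hy' _ right_mem_uIcc).1,
    integral_congr fun τ hτ => (hy' _ left_mem_uIcc).2 τ hτ,
    integral_congr fun τ hτ => (hy' _ right_mem_uIcc).2 τ hτ,
    integral_congr fun s hs => (hy' s hs).2 y right_mem_uIcc]

theorem continuousOn_add_primitive_comp (hT : IsOpen T) (hf : ContinuousOn f S)
    (hW : ContinuousOn (uncurry W) (S ×ˢ T)) (hβ : Continuous β) (hβT : MapsTo β T S)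
    (hc : c ∈ T) : ContinuousOn (fun y => f (β y) + ∫ τ in c..y, W (β y) τ) T := by
  intro y hy
  obtain ⟨f', W', hf', hW', heq⟩ := exists_continuous_extension_near hT hf hW hβ hβ hβT hβT hc hy
  have hcont : Continuous fun y => f' (β y) + ∫ τ in c..y, W' (β y) τ :=
    (hf'.comp hβ).add (continuous_parametric_intervalIntegral_of_continuous
      (f := fun y τ => W' (β y) τ)
      (hW'.comp (by fun_prop : Continuous fun z : ℝ × ℝ => (β z.1, z.2)))
      continuous_id)
  refine (hcont.continuousAt.congr (heq.mono fun x hx => ?_)).continuousWithinAt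
  simp only [(hx _ left_mem_uIcc).1, integral_congr fun τ hτ => (hx _ left_mem_uIcc).2 τ hτ]

theorem hasDerivAt_integral_of_hasDerivAt_snd {φ ψ : ℝ → ℝ → ℝ} (hT : IsOpen T)
    (hφ : ContinuousOn (uncurry φ) (S ×ˢ T)) (hψ : ContinuousOn (uncurry ψ) (S ×ˢ T))
    (hφψ : ∀ s ∈ S, ∀ t ∈ T, HasDerivAt (φ s) (ψ s t) t) {a b y : ℝ} (ha : a ∈ S) (hb : b ∈ S)
    (hy : y ∈ T) : HasDerivAt (fun y => ∫ s in a..b, φ s y) (∫ s in a..b, ψ s y) y := by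
  have hφy : ContinuousOn (fun s => φ s y) S :=
    hφ.comp (by fun_prop : Continuous fun s => (s, y)).continuousOn fun s hs => ⟨hs, hy⟩
  have hev : (fun x => ∫ s in a..b, φ s x) =ᶠ[𝓝 y]
      fun x => ∫ s in a..b, (φ s y + ∫ t in y..x, ψ s t) := by
    filter_upwards [hT.mem_nhds hy] with x hx
    refine integral_congr fun s hs => ?_
    have hsS : s ∈ S := OrdConnected.uIcc_subset ‹_› ha hb hs
    have hyx : uIcc y x ⊆ T := OrdConnected.uIcc_subset ‹_› hy hx
    rw [integral_eq_sub_of_hasDerivAt (fun t ht => hφψ s hsS t (hyx ht))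
      ((hψ.comp (by fun_prop : Continuous fun t => (s, t)).continuousOn
        fun t ht => ⟨hsS, hyx ht⟩).intervalIntegrable)]
    ring
  refine ((hasDerivAt_integral_add_primitive_of_continuousOn hT hφy hψ continuous_const
    continuous_const (fun _ _ => ha) (fun _ _ => hb) hy hy (hasDerivAt_const y a)
    (hasDerivAt_const y b)).congr_of_eventuallyEq hev).congr_deriv ?_
  ring

end Leibniz

theorem continuousOn_uncurry_of_hasDerivAt_snd {φ ψ : ℝ → ℝ → ℝ} {U : Set (ℝ × ℝ)}
    (hU : IsOpen U) (hφ : ContDiffOn ℝ 1 (uncurry φ) U)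
    (hψ : ∀ z ∈ U, HasDerivAt (φ z.1) (ψ z.1 z.2) z.2) : ContinuousOn (uncurry ψ) U := by
  refine ((hφ.continuousOn_fderiv_of_isOpen hU le_rfl).clm_apply
    (continuousOn_const (c := ((0 : ℝ), (1 : ℝ))))).congr fun z hz => ?_
  have hd := ((hφ.differentiableOn one_ne_zero).differentiableAt (hU.mem_nhds hz)).hasFDerivAt
    |>.comp_hasDerivAt z.2 ((hasDerivAt_const z.2 z.1).prodMk (hasDerivAt_id z.2))
  exact (hψ z hz).unique hd

section Characteristic

variable {t : ℝ}

theorem one_sub_cos_pos (ht : t ∈ Ioo 0 π) : 0 < 1 - cos t := by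
  nlinarith [sin_sq_add_cos_sq t, sin_pos_of_mem_Ioo ht, cos_le_one t]

theorem one_add_cos_pos (ht : t ∈ Ioo 0 π) : 0 < 1 + cos t := by
  nlinarith [sin_sq_add_cos_sq t, sin_pos_of_mem_Ioo ht, neg_one_le_cos t]

theorem pi_div_two_mem_Ioo : π / 2 ∈ Ioo 0 π := ⟨by positivity, by linarith [pi_pos]⟩

theorem fChar_pi_div_two : fChar (π / 2) = 0 := by
  simp [fChar]

theorem hasDerivAt_fChar (ht : t ∈ Ioo 0 π) : HasDerivAt fChar (sin t)⁻¹ t := by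
  have hs := sin_pos_of_mem_Ioo ht
  have h1 := one_sub_cos_pos ht
  have h2 := one_add_cos_pos ht
  have hq := (((hasDerivAt_cos t).const_sub 1).div ((hasDerivAt_cos t).const_add 1)
    h2.ne').log (div_pos h1 h2).ne'
  refine (hq.const_mul (1 / 2)).congr_deriv ?_
  simp only [Pi.div_apply]
  field_simp
  linear_combination 2 * sin_sq_add_cos_sq t

theorem exp_fChar (ht : t ∈ Ioo 0 π) : exp (fChar t) = (1 - cos t) / sin t := by
  have hs := sin_pos_of_mem_Ioo ht
  have h1 := one_sub_cos_pos ht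
  have h2 := one_add_cos_pos ht
  refine (pow_left_inj₀ (exp_pos _).le (div_pos h1 hs).le two_ne_zero).1 ?_
  rw [← exp_nat_mul, fChar, ← mul_assoc, Nat.cast_two, mul_one_div_cancel two_ne_zero, one_mul,
    exp_log (div_pos h1 h2), div_pow, div_eq_div_iff h2.ne' (by positivity)]
  linear_combination (1 - cos t) * sin_sq_add_cos_sq t

theorem thetaBar_fChar (ht : t ∈ Ioo 0 π) : thetaBar (fChar t) = t := by
  have hs := sin_pos_of_mem_Ioo ht
  have h1 := one_sub_cos_pos ht
  rw [thetaBar, two_mul, exp_add, exp_fChar ht]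
  convert arccos_cos ht.1.le ht.2.le using 2
  field_simp
  nlinarith [sin_sq_add_cos_sq t]

theorem exp_add_exp_neg_fChar (ht : t ∈ Ioo 0 π) :
    exp (fChar t) + exp (-fChar t) = 2 / sin t := by
  have hs := sin_pos_of_mem_Ioo ht
  have h1 := one_sub_cos_pos ht
  rw [exp_neg, exp_fChar ht]
  field_simp
  nlinarith [sin_sq_add_cos_sq t]

theorem thetaBar_mem_Ioo (s : ℝ) : thetaBar s ∈ Ioo 0 π := by
  have he := exp_pos (2 * s)
  refine ⟨arccos_pos.2 ?_, arccos_lt_pi.2 ?_⟩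
  · rw [div_lt_one (by positivity)]; linarith
  · rw [lt_div_iff₀ (by positivity)]; linarith

theorem continuous_thetaBar : Continuous thetaBar :=
  continuous_arccos.comp <| Continuous.div (by fun_prop) (by fun_prop) fun s => by positivity

end Characteristic

noncomputable def calFθ (g : ℝ) (ρθ : ℝ → ℝ → ℝ) (ξ τ : ℝ) : ℝ :=
  g * ρθ (ξ / sin τ) τ / sin τ

section CalF

variable {g : ℝ} {ρθ : ℝ → ℝ → ℝ}

theorem continuousOn_calFθ (hρθ : ContinuousOn (uncurry ρθ) (Ioi 0 ×ˢ Ioo 0 π)) :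
    ContinuousOn (uncurry (calFθ g ρθ)) (Ioi 0 ×ˢ Ioo 0 π) := by
  have hsin : ∀ z ∈ Ioi (0 : ℝ) ×ˢ Ioo 0 π, sin z.2 ≠ 0 := fun z hz =>
    (sin_pos_of_mem_Ioo hz.2).ne'
  show ContinuousOn (fun z : ℝ × ℝ => g * ρθ (z.1 / sin z.2) z.2 / sin z.2) _
  refine (continuousOn_const.mul (hρθ.comp (f := fun z : ℝ × ℝ => (z.1 / sin z.2, z.2))
    ((continuousOn_fst.div (by fun_prop) hsin).prodMk continuousOn_snd)
    fun z hz => ⟨?_, hz.2⟩)).div (by fun_prop) hsin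
  exact div_pos hz.1 (sin_pos_of_mem_Ioo hz.2)

theorem calF_eq_integral_calFθ (hρθ : ContinuousOn (uncurry ρθ) (Ioi 0 ×ˢ Ioo 0 π)) {ξ y : ℝ}
    (hξ : 0 < ξ) (hy : y ∈ Ioo 0 π) : calF g ρθ ξ y = ∫ τ in π / 2..y, calFθ g ρθ ξ τ := by
  have hsub : uIcc (π / 2) y ⊆ Ioo 0 π := ordConnected_Ioo.uIcc_subset pi_div_two_mem_Ioo hy
  have hint : Continuous fun s => g * ρθ (ξ * (exp s + exp (-s)) / 2) (thetaBar s) :=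
    continuous_const.mul <| hρθ.comp_continuous
      (f := fun s => (ξ * (exp s + exp (-s)) / 2, thetaBar s))
      ((by fun_prop : Continuous fun s => ξ * (exp s + exp (-s)) / 2).prodMk continuous_thetaBar)
      fun s => ⟨mem_Ioi.2 (by positivity), thetaBar_mem_Ioo s⟩
  have key := integral_comp_mul_deriv (fun τ hτ => hasDerivAt_fChar (hsub hτ))
    (continuous_sin.continuousOn.inv₀ fun τ hτ => (sin_pos_of_mem_Ioo (hsub hτ)).ne') hint
  rw [fChar_pi_div_two] at key
  rw [calF, ← key]
  refine integral_congr fun τ hτ => ?_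
  simp only [Function.comp_apply, calFθ, thetaBar_fChar (hsub hτ), exp_add_exp_neg_fChar (hsub hτ)]
  field_simp

theorem integral_calFθ (a r : ℝ) {θ : ℝ} (hθ : sin θ ≠ 0) :
    ∫ s in a * sin θ..r * sin θ, calFθ g ρθ s θ = g * ∫ s in a..r, ρθ s θ := by
  simp only [calFθ, mul_div_assoc, div_eq_mul_inv (ρθ _ θ), ← mul_assoc,
    intervalIntegral.integral_mul_const, intervalIntegral.integral_const_mul]
  rw [intervalIntegral.integral_comp_div (fun u => ρθ u θ) hθ, smul_eq_mul]
  field_simp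

end CalF

section Pressure

variable {g : ℝ} {ρθ : ℝ → ℝ → ℝ} {F : ℝ → ℝ}

theorem mapsTo_mul_sin {a : ℝ} (ha : 0 < a) : MapsTo (fun y => a * sin y) (Ioo 0 π) (Ioi 0) :=
  fun _ hy => mul_pos ha (sin_pos_of_mem_Ioo hy)

theorem continuousOn_div_id (hF : ContinuousOn F (Ioi 0)) :
    ContinuousOn (fun s => F s / s) (Ioi 0) :=
  hF.div continuousOn_id fun _ hs => ne_of_gt hs

theorem hasDerivAt_integral_F_div_add_calF (hF : ContinuousOn F (Ioi 0))
    (hρθ : ContinuousOn (uncurry ρθ) (Ioi 0 ×ˢ Ioo 0 π)) {a r θ : ℝ} (ha : 0 < a) (hr : 0 < r)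
    (hθ : θ ∈ Ioo 0 π) :
    HasDerivAt (fun y => ∫ s in a * sin y..r * sin y, (F s / s + calF g ρθ s y))
      (r * cos θ * (F (r * sin θ) / (r * sin θ) + calF g ρθ (r * sin θ) θ)
        - a * cos θ * (F (a * sin θ) / (a * sin θ) + calF g ρθ (a * sin θ) θ)
        + g * ∫ s in a..r, ρθ s θ) θ := by
  have hev : (fun y => ∫ s in a * sin y..r * sin y, (F s / s + calF g ρθ s y)) =ᶠ[𝓝 θ]
      fun y => ∫ s in a * sin y..r * sin y, (F s / s + ∫ τ in π / 2..y, calFθ g ρθ s τ) := by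
    filter_upwards [isOpen_Ioo.mem_nhds hθ] with y hy
    refine integral_congr fun s hs => ?_
    rw [calF_eq_integral_calFθ hρθ (ordConnected_Ioi.uIcc_subset (mapsTo_mul_sin ha hy)
      (mapsTo_mul_sin hr hy) hs) hy]
  refine ((hasDerivAt_integral_add_primitive_of_continuousOn isOpen_Ioo
    (continuousOn_div_id hF) (continuousOn_calFθ hρθ) (by fun_prop)
    (by fun_prop) (mapsTo_mul_sin ha) (mapsTo_mul_sin hr) pi_div_two_mem_Ioo hθ
    ((hasDerivAt_sin θ).const_mul a) ((hasDerivAt_sin θ).const_mul r)).congr_of_eventuallyEq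
    hev).congr_deriv ?_
  rw [calF_eq_integral_calFθ hρθ (mapsTo_mul_sin hr hθ) hθ,
    calF_eq_integral_calFθ hρθ (mapsTo_mul_sin ha hθ) hθ,
    integral_calFθ a r (sin_pos_of_mem_Ioo hθ).ne']

theorem hasDerivAt_integral_F_cot_add_calF (hF : ContinuousOn F (Ioi 0))
    (hρθ : ContinuousOn (uncurry ρθ) (Ioi 0 ×ˢ Ioo 0 π)) {a θ : ℝ} (ha : 0 < a)
    (hθ : θ ∈ Ioo 0 π) :
    HasDerivAt
      (fun y => ∫ σ in π / 2..y, (F (a * sin σ) * cot σ + calF g ρθ (a * sin σ) σ * a * cos σ))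
      (F (a * sin θ) * cot θ + calF g ρθ (a * sin θ) θ * a * cos θ) θ := by
  have hcont : ContinuousOn
      (fun σ => F (a * sin σ) * cot σ + calF g ρθ (a * sin σ) σ * a * cos σ) (Ioo 0 π) := by
    have hcos : Continuous fun σ => a * cos σ := by fun_prop
    refine (hcos.continuousOn.mul (continuousOn_add_primitive_comp isOpen_Ioo
      (continuousOn_div_id hF) (continuousOn_calFθ (g := g) hρθ) (by fun_prop) (mapsTo_mul_sin ha)
      pi_div_two_mem_Ioo)).congr fun σ hσ => ?_
    have hs := (sin_pos_of_mem_Ioo hσ).ne'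
    rw [Pi.mul_apply, calF_eq_integral_calFθ hρθ (mapsTo_mul_sin ha hσ) hσ, cot_eq_cos_div_sin]
    field_simp
  exact integral_hasDerivAt_right
    (hcont.mono (ordConnected_Ioo.uIcc_subset pi_div_two_mem_Ioo hθ)).intervalIntegrable
    (hcont.stronglyMeasurableAtFilter isOpen_Ioo θ hθ) (hcont.continuousAt (isOpen_Ioo.mem_nhds hθ))

end Pressure

theorem pressure_deriv_theta_general (g a b : ℝ) (ha : 0 < a)
    (ρ ρθ : ℝ → ℝ → ℝ)
    (hρ : ContDiffOn ℝ 2 (fun q : ℝ × ℝ => ρ q.1 q.2)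
      (Set.Ioi 0 ×ˢ Set.Ioo 0 Real.pi))
    (hρθ : ∀ r ∈ Set.Ioi (0:ℝ), ∀ t ∈ Set.Ioo 0 Real.pi,
      HasDerivAt (fun u => ρ r u) (ρθ r t) t)
    (F : ℝ → ℝ) (hF : ContDiffOn ℝ 1 F (Set.Ioi 0))
    (r θ : ℝ) (hr : 0 < r) (hθ : θ ∈ Set.Ioo 0 Real.pi) :
    HasDerivAt (fun θ' => pres g a b ρ ρθ F r θ')
      (Real.cot θ *
        (F (r * Real.sin θ) + r * Real.sin θ * calF g ρθ (r * Real.sin θ) θ)) θ ∧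
    Real.cot θ * (F (r * Real.sin θ) + r * Real.sin θ * calF g ρθ (r * Real.sin θ) θ)
      = Real.cot θ * UU g ρθ F r θ := by
  refine ⟨?_, rfl⟩
  have hρθc : ContinuousOn (uncurry ρθ) (Ioi 0 ×ˢ Ioo 0 π) :=
    continuousOn_uncurry_of_hasDerivAt_snd (isOpen_Ioi.prod isOpen_Ioo) (hρ.of_le one_le_two)
      fun z hz => hρθ z.1 hz.1 z.2 hz.2
  have hradial := hasDerivAt_integral_of_hasDerivAt_snd isOpen_Ioo hρ.continuousOn hρθc
    hρθ (mem_Ioi.2 ha) (mem_Ioi.2 hr) hθ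
  have hmiddle := hasDerivAt_integral_F_div_add_calF (g := g) hF.continuousOn hρθc ha hr hθ
  have harc := hasDerivAt_integral_F_cot_add_calF (g := g) hF.continuousOn hρθc ha hθ
  have hs := (sin_pos_of_mem_Ioo hθ).ne'
  refine ((((hradial.const_mul g).const_sub b).add hmiddle).add harc).congr_deriv ?_
  rw [cot_eq_cos_div_sin]
  field_simp
  ring

/-- For every `r > 0`, `θ ∈ (0,π)` the map `θ ↦ p(r,θ)` is differentiable and
`p_θ(r,θ) = cot θ·(F(r sin θ) + r sin θ·𝓕(r sin θ,θ)) = cot θ·U(r,θ)`. -/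
theorem pressure_deriv_theta (g a b : ℝ) (hg : 0 < g) (ha : 0 < a)
    (ρ ρθ : ℝ → ℝ → ℝ)
    (hρ : ContDiffOn ℝ 2 (fun q : ℝ × ℝ => ρ q.1 q.2)
      (Set.Ioi 0 ×ˢ Set.Ioo 0 Real.pi))
    (hρθ : ∀ r ∈ Set.Ioi (0:ℝ), ∀ t ∈ Set.Ioo 0 Real.pi,
      HasDerivAt (fun u => ρ r u) (ρθ r t) t)
    (F : ℝ → ℝ) (hF : ContDiffOn ℝ 1 F (Set.Ioi 0))
    (r θ : ℝ) (hr : 0 < r) (hθ : θ ∈ Set.Ioo 0 Real.pi) :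
    HasDerivAt (fun θ' => pres g a b ρ ρθ F r θ')
      (Real.cot θ *
        (F (r * Real.sin θ) + r * Real.sin θ * calF g ρθ (r * Real.sin θ) θ)) θ ∧
    Real.cot θ * (F (r * Real.sin θ) + r * Real.sin θ * calF g ρθ (r * Real.sin θ) θ)
      = Real.cot θ * UU g ρθ F r θ :=
  pressure_deriv_theta_general g a b ha ρ ρθ hρ hρθ F hF r θ hr hθ
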